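/- arXiv:2409.13579 — 3 statements merged into one kernel-verified Lean document; each statement's English description precedes it below -/
import Mathlib

section
/- Let s : ℕ → ℂ be a signature with s(0) = 1. Then χ(d,s) = 0 for every integer d ≥ 2 if and only if s(n) = s(1)^n for every natural number n. -/
open Finset

/-- `P` is a set partition of the finite set `s`: its blocks are nonempty subsets of `s`,
and every element of `s` lies in exactly one block. -/
def IsPartitionOf {α : Type*} [DecidableEq α] (s : Finset α) (P : Finset (Finset α)) : Prop :=
  ∅ ∉ P ∧ (∀ B ∈ P, B ⊆ s) ∧ ∀ a ∈ s, ∃! B, B ∈ P ∧ a ∈ B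

open Classical in
/-- The finset of all set partitions of a finset `s`. -/
noncomputable def partitionsOf {α : Type*} [DecidableEq α] (s : Finset α) :
    Finset (Finset (Finset α)) :=
  s.powerset.powerset.filter (IsPartitionOf s)

/-- The fingerprint `χ(d, s)` of a signature `s`:
`χ(d,s) = ∑_σ (−1)^{|σ|−1}(|σ|−1)!·∏_{B∈σ} s(|B|)/s(0)`,
where `σ` ranges over all set partitions of `{1,…,d}`. -/
noncomputable def chi (s : ℕ → ℂ) (d : ℕ) : ℂ :=
  ∑ P ∈ partitionsOf (Finset.univ : Finset (Fin d)),
    (-1 : ℂ) ^ (P.card - 1) * ((P.card - 1).factorial : ℂ) * ∏ B ∈ P, s B.card / s 0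

section Aux

variable {α : Type*} [DecidableEq α]

lemma mem_partitionsOf {s : Finset α} {P : Finset (Finset α)} :
    P ∈ partitionsOf s ↔ IsPartitionOf s P := by
  classical
  constructor
  · intro h
    exact (Finset.mem_filter.mp h).2
  · intro h
    refine Finset.mem_filter.mpr ⟨?_, h⟩
    exact Finset.mem_powerset.mpr fun B hB => Finset.mem_powerset.mpr (h.2.1 B hB)

lemma sum_card_blocks {s : Finset α} {P : Finset (Finset α)} (hP : IsPartitionOf s P) :
    ∑ B ∈ P, B.card = s.card := by
  have hdisj : ∀ B ∈ P, ∀ C ∈ P, B ≠ C → Disjoint (id B) (id C) := by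
    intro B hB C hC hBC
    rw [Finset.disjoint_left]
    intro x hxB hxC
    obtain ⟨D, _, hu⟩ := hP.2.2 x (hP.2.1 B hB hxB)
    exact hBC ((hu B ⟨hB, hxB⟩).trans (hu C ⟨hC, hxC⟩).symm)
  have hbU : P.biUnion id = s := by
    ext x
    simp only [Finset.mem_biUnion, id]
    constructor
    · rintro ⟨B, hB, hx⟩; exact hP.2.1 B hB hx
    · intro hx; obtain ⟨B, ⟨hB, hxB⟩, _⟩ := hP.2.2 x hx; exact ⟨B, hB, hxB⟩
  calc ∑ B ∈ P, B.card = (P.biUnion id).card := (Finset.card_biUnion hdisj).symm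
    _ = s.card := by rw [hbU]

lemma notmem_of_subset_erase {s : Finset α} {a : α} {Q : Finset (Finset α)}
    (hQ : ∀ B ∈ Q, B ⊆ s.erase a) : ∀ B ∈ Q, a ∉ B :=
  fun B hB h => Finset.notMem_erase a s (hQ B hB h)

lemma partA {s : Finset α} {a : α} (ha : a ∈ s) {Q : Finset (Finset α)}
    (hQ : IsPartitionOf (s.erase a) Q) : IsPartitionOf s (insert {a} Q) := by
  have hQa : ∀ B ∈ Q, a ∉ B := notmem_of_subset_erase hQ.2.1
  refine ⟨?_, ?_, ?_⟩
  · intro h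
    rcases Finset.mem_insert.mp h with h | h
    · exact (Finset.singleton_nonempty a).ne_empty h.symm
    · exact hQ.1 h
  · intro B hB
    rcases Finset.mem_insert.mp hB with rfl | hB
    · exact Finset.singleton_subset_iff.mpr ha
    · exact (hQ.2.1 B hB).trans (Finset.erase_subset a s)
  · intro x hx
    by_cases hxa : x = a
    · subst hxa
      refine ⟨{x}, ⟨Finset.mem_insert_self _ _, Finset.mem_singleton_self x⟩, ?_⟩
      rintro E ⟨hE, hxE⟩
      rcases Finset.mem_insert.mp hE with rfl | hE
      · rfl
      · exact (hQa E hE hxE).elim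
    · obtain ⟨D, ⟨hD, hxD⟩, hDu⟩ := hQ.2.2 x (Finset.mem_erase.mpr ⟨hxa, hx⟩)
      refine ⟨D, ⟨Finset.mem_insert_of_mem hD, hxD⟩, ?_⟩
      rintro E ⟨hE, hxE⟩
      rcases Finset.mem_insert.mp hE with rfl | hE
      · exact (hxa (Finset.mem_singleton.mp hxE)).elim
      · exact hDu E ⟨hE, hxE⟩

lemma partB {s : Finset α} {a : α} (ha : a ∈ s) {Q : Finset (Finset α)}
    (hQ : IsPartitionOf (s.erase a) Q) {B : Finset α} (hB : B ∈ Q) :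
    IsPartitionOf s (insert (insert a B) (Q.erase B)) := by
  have hQa : ∀ C ∈ Q, a ∉ C := notmem_of_subset_erase hQ.2.1
  refine ⟨?_, ?_, ?_⟩
  · intro h
    rcases Finset.mem_insert.mp h with h | h
    · exact (Finset.insert_nonempty a B).ne_empty h.symm
    · exact hQ.1 (Finset.mem_of_mem_erase h)
  · intro C hC
    rcases Finset.mem_insert.mp hC with rfl | hC
    · exact Finset.insert_subset ha ((hQ.2.1 B hB).trans (Finset.erase_subset a s))
    · exact (hQ.2.1 C (Finset.mem_of_mem_erase hC)).trans (Finset.erase_subset a s)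
  · intro x hx
    by_cases hxa : x = a
    · subst hxa
      refine ⟨insert x B, ⟨Finset.mem_insert_self _ _, Finset.mem_insert_self _ _⟩, ?_⟩
      rintro E ⟨hE, hxE⟩
      rcases Finset.mem_insert.mp hE with rfl | hE
      · rfl
      · exact (hQa E (Finset.mem_of_mem_erase hE) hxE).elim
    · obtain ⟨D, ⟨hD, hxD⟩, hDu⟩ := hQ.2.2 x (Finset.mem_erase.mpr ⟨hxa, hx⟩)
      by_cases hDB : D = B
      · refine ⟨insert a B, ⟨Finset.mem_insert_self _ _,
          Finset.mem_insert_of_mem (hDB ▸ hxD)⟩, ?_⟩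
        rintro E ⟨hE, hxE⟩
        rcases Finset.mem_insert.mp hE with rfl | hE
        · rfl
        · exact absurd ((hDu E ⟨Finset.mem_of_mem_erase hE, hxE⟩).trans hDB)
            (Finset.ne_of_mem_erase hE)
      · refine ⟨D, ⟨Finset.mem_insert_of_mem (Finset.mem_erase.mpr ⟨hDB, hD⟩), hxD⟩, ?_⟩
        rintro E ⟨hE, hxE⟩
        rcases Finset.mem_insert.mp hE with rfl | hE
        · exact ((hDB (hDu B ⟨hB, (Finset.mem_insert.mp hxE).resolve_left hxa⟩).symm)).elim
        · exact hDu E ⟨Finset.mem_of_mem_erase hE, hxE⟩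

lemma exists_fiber {s : Finset α} {a : α} (ha : a ∈ s) {P : Finset (Finset α)}
    (hP : IsPartitionOf s P) :
    ∃ Q, IsPartitionOf (s.erase a) Q ∧
      (P = insert {a} Q ∨ ∃ B ∈ Q, P = insert (insert a B) (Q.erase B)) := by
  obtain ⟨C, ⟨hCP, haC⟩, huniq⟩ := hP.2.2 a ha
  by_cases hC : C = {a}
  · refine ⟨P.erase {a}, ⟨?_, ?_, ?_⟩, Or.inl (Finset.insert_erase (hC ▸ hCP)).symm⟩
    · exact fun h => hP.1 (Finset.mem_of_mem_erase h)
    · intro D hD x hx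
      have hDP := Finset.mem_of_mem_erase hD
      refine Finset.mem_erase.mpr ⟨?_, hP.2.1 D hDP hx⟩
      intro hxa; subst hxa
      exact (Finset.ne_of_mem_erase hD) ((huniq D ⟨hDP, hx⟩).trans hC)
    · intro x hx
      obtain ⟨hxa, hxs⟩ := Finset.mem_erase.mp hx
      obtain ⟨D, ⟨hDP, hxD⟩, hDu⟩ := hP.2.2 x hxs
      have hDne : D ≠ {a} := fun h => hxa (by simpa [h] using hxD)
      exact ⟨D, ⟨Finset.mem_erase.mpr ⟨hDne, hDP⟩, hxD⟩,
        fun E hE => hDu E ⟨Finset.mem_of_mem_erase hE.1, hE.2⟩⟩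
  · set B := C.erase a with hBdef
    have haB : a ∉ B := Finset.notMem_erase _ _
    have hBne : B.Nonempty := by
      rcases B.eq_empty_or_nonempty with h | h
      · exfalso
        apply hC
        apply Finset.eq_singleton_iff_unique_mem.mpr
        refine ⟨haC, fun x hx => ?_⟩
        by_contra hxa
        have : x ∈ B := Finset.mem_erase.mpr ⟨hxa, hx⟩
        rw [h] at this
        exact absurd this (Finset.notMem_empty x)
      · exact h
    have hBP : B ∉ P := by
      intro hBP
      obtain ⟨b, hb⟩ := hBne
      have hbC : b ∈ C := Finset.mem_of_mem_erase hb
      obtain ⟨D, _, hDu⟩ := hP.2.2 b (hP.2.1 C hCP hbC)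
      have h1 := hDu B ⟨hBP, hb⟩
      have h2 := hDu C ⟨hCP, hbC⟩
      exact haB ((h1.trans h2.symm) ▸ haC)
    refine ⟨insert B (P.erase C), ⟨?_, ?_, ?_⟩, Or.inr ⟨B, Finset.mem_insert_self _ _, ?_⟩⟩
    · intro h
      rcases Finset.mem_insert.mp h with h | h
      · exact hBne.ne_empty h.symm
      · exact hP.1 (Finset.mem_of_mem_erase h)
    · intro D hD
      rcases Finset.mem_insert.mp hD with hD1 | hD2
      · exact hD1 ▸ Finset.erase_subset_erase a (hP.2.1 C hCP)
      · intro x hx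
        have hDP := Finset.mem_of_mem_erase hD2
        refine Finset.mem_erase.mpr ⟨?_, hP.2.1 D hDP hx⟩
        intro hxa; subst hxa
        exact (Finset.ne_of_mem_erase hD2) (huniq D ⟨hDP, hx⟩)
    · intro x hx
      obtain ⟨hxa, hxs⟩ := Finset.mem_erase.mp hx
      obtain ⟨D, ⟨hDP, hxD⟩, hDu⟩ := hP.2.2 x hxs
      by_cases hDC : D = C
      · refine ⟨B, ⟨Finset.mem_insert_self _ _,
          Finset.mem_erase.mpr ⟨hxa, hDC ▸ hxD⟩⟩, ?_⟩
        rintro E ⟨hE, hxE⟩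
        rcases Finset.mem_insert.mp hE with rfl | hE
        · rfl
        · exact absurd ((hDu E ⟨Finset.mem_of_mem_erase hE, hxE⟩).trans hDC)
            (Finset.ne_of_mem_erase hE)
      · refine ⟨D, ⟨Finset.mem_insert_of_mem (Finset.mem_erase.mpr ⟨hDC, hDP⟩), hxD⟩, ?_⟩
        rintro E ⟨hE, hxE⟩
        rcases Finset.mem_insert.mp hE with rfl | hE
        · exact ((hDC (hDu C ⟨hCP, Finset.mem_of_mem_erase hxE⟩).symm)).elim
        · exact hDu E ⟨Finset.mem_of_mem_erase hE, hxE⟩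
    · have h1 : insert a B = C := Finset.insert_erase haC
      have h2 : (insert B (P.erase C)).erase B = P.erase C :=
        Finset.erase_insert (fun h => hBP (Finset.mem_of_mem_erase h))
      rw [h1, h2, Finset.insert_erase hCP]

lemma image_erase_id {Q : Finset (Finset α)} {a : α} (hQa : ∀ B ∈ Q, a ∉ B) :
    Q.image (fun B => B.erase a) = Q := by
  ext B
  simp only [Finset.mem_image]
  constructor
  · rintro ⟨C, hC, rfl⟩; rwa [Finset.erase_eq_of_notMem (hQa C hC)]
  · intro hB; exact ⟨B, hB, Finset.erase_eq_of_notMem (hQa B hB)⟩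

lemma delA_1 {Q : Finset (Finset α)} {a : α} (hQ0 : ∅ ∉ Q) (hQa : ∀ B ∈ Q, a ∉ B) :
    ((insert {a} Q).image (fun B => B.erase a)).erase ∅ = Q := by
  rw [Finset.image_insert]
  have h1 : ({a} : Finset α).erase a = ∅ := by simp
  rw [h1, image_erase_id hQa, Finset.erase_insert hQ0]

lemma delA_2 {Q : Finset (Finset α)} {a : α} {B : Finset α} (hB : B ∈ Q)
    (hQ0 : ∅ ∉ Q) (hQa : ∀ C ∈ Q, a ∉ C) :
    ((insert (insert a B) (Q.erase B)).image (fun C => C.erase a)).erase ∅ = Q := by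
  rw [Finset.image_insert]
  have h1 : (insert a B).erase a = B := Finset.erase_insert (hQa B hB)
  have h2 : (Q.erase B).image (fun C => C.erase a) = Q.erase B :=
    image_erase_id (fun C hC => hQa C (Finset.mem_of_mem_erase hC))
  rw [h1, h2, Finset.insert_erase hB, Finset.erase_eq_of_notMem hQ0]

lemma Zsum (s : Finset α) (hs : 2 ≤ s.card) :
    ∑ P ∈ partitionsOf s,
      (-1 : ℂ) ^ (P.card - 1) * ((P.card - 1).factorial : ℂ) = 0 := by
  obtain ⟨a, ha⟩ : s.Nonempty := Finset.card_pos.mp (by omega)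
  set t := s.erase a with htdef
  have htcard : 1 ≤ t.card := by
    have h := Finset.card_erase_add_one ha
    rw [← htdef] at h
    omega
  set F : Finset (Finset α) → Finset (Finset (Finset α)) := fun Q =>
    insert (insert {a} Q) (Q.image fun B => insert (insert a B) (Q.erase B)) with hFdef
  have hmemF : ∀ {Q : Finset (Finset α)}, IsPartitionOf t Q → ∀ {P}, P ∈ F Q →
      ((P.image (fun C => C.erase a)).erase ∅ = Q) := by
    intro Q hQ P hP
    have hQa : ∀ C ∈ Q, a ∉ C := notmem_of_subset_erase hQ.2.1
    rcases Finset.mem_insert.mp hP with rfl | hP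
    · exact delA_1 hQ.1 hQa
    · obtain ⟨B, hB, rfl⟩ := Finset.mem_image.mp hP
      exact delA_2 hB hQ.1 hQa
  have hcover : partitionsOf s = (partitionsOf t).biUnion F := by
    ext P
    simp only [Finset.mem_biUnion]
    constructor
    · intro hP
      obtain ⟨Q, hQ, hPQ⟩ := exists_fiber ha (mem_partitionsOf.mp hP)
      refine ⟨Q, mem_partitionsOf.mpr hQ, ?_⟩
      rcases hPQ with rfl | ⟨B, hB, rfl⟩
      · exact Finset.mem_insert_self _ _
      · exact Finset.mem_insert_of_mem (Finset.mem_image.mpr ⟨B, hB, rfl⟩)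
    · rintro ⟨Q, hQ, hP⟩
      have hQ' := mem_partitionsOf.mp hQ
      rcases Finset.mem_insert.mp hP with rfl | hP
      · exact mem_partitionsOf.mpr (partA ha hQ')
      · obtain ⟨B, hB, rfl⟩ := Finset.mem_image.mp hP
        exact mem_partitionsOf.mpr (partB ha hQ' hB)
  have hdisj : ∀ Q1 ∈ partitionsOf t, ∀ Q2 ∈ partitionsOf t, Q1 ≠ Q2 →
      Disjoint (F Q1) (F Q2) := by
    intro Q1 h1 Q2 h2 hne
    rw [Finset.disjoint_left]
    intro P hP1 hP2
    exact hne ((hmemF (mem_partitionsOf.mp h1) hP1).symm.trans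
      (hmemF (mem_partitionsOf.mp h2) hP2))
  rw [hcover, Finset.sum_biUnion hdisj]
  refine Finset.sum_eq_zero fun Q hQ => ?_
  have hQ' := mem_partitionsOf.mp hQ
  have hQa : ∀ C ∈ Q, a ∉ C := notmem_of_subset_erase hQ'.2.1
  have hQne : Q.Nonempty := by
    obtain ⟨x, hx⟩ : t.Nonempty := Finset.card_pos.mp (by omega)
    obtain ⟨B, ⟨hB, _⟩, _⟩ := hQ'.2.2 x hx
    exact ⟨B, hB⟩
  obtain ⟨m, hm⟩ : ∃ m, Q.card = m + 1 := by
    have := Finset.card_pos.mpr hQne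
    exact ⟨Q.card - 1, by omega⟩
  have hsna : ({a} : Finset α) ∉ Q := fun h => hQa {a} h (Finset.mem_singleton_self a)
  have hXnot : insert {a} Q ∉ Q.image (fun B => insert (insert a B) (Q.erase B)) := by
    intro h
    obtain ⟨B, hB, hEq⟩ := Finset.mem_image.mp h
    have hmem : ({a} : Finset α) ∈ insert (insert a B) (Q.erase B) := by
      rw [hEq]; exact Finset.mem_insert_self _ _
    rcases Finset.mem_insert.mp hmem with h1 | h1
    · obtain ⟨b, hb⟩ : B.Nonempty := Finset.nonempty_iff_ne_empty.mpr
        (fun h => hQ'.1 (h ▸ hB))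
      have hbmem : b ∈ ({a} : Finset α) := by rw [h1]; exact Finset.mem_insert_of_mem hb
      exact hQa B hB ((Finset.mem_singleton.mp hbmem) ▸ hb)
    · exact hQa {a} (Finset.mem_of_mem_erase h1) (Finset.mem_singleton_self a)
  have hginj : ∀ x ∈ Q, ∀ y ∈ Q,
      (insert (insert a x) (Q.erase x)) = (insert (insert a y) (Q.erase y)) → x = y := by
    intro x hx y hy hEq
    have hmem : insert a x ∈ insert (insert a y) (Q.erase y) := by
      rw [← hEq]; exact Finset.mem_insert_self _ _
    rcases Finset.mem_insert.mp hmem with h1 | h1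
    · have := congrArg (fun z => Finset.erase z a) h1
      simpa [Finset.erase_insert (hQa x hx), Finset.erase_insert (hQa y hy)] using this
    · exact absurd (Finset.mem_of_mem_erase h1)
        (fun h => hQa _ h (Finset.mem_insert_self a x))
  have hcard1 : (insert {a} Q).card = m + 2 := by
    rw [Finset.card_insert_of_notMem hsna, hm]
  have hcard2 : ∀ B ∈ Q, (insert (insert a B) (Q.erase B)).card = m + 1 := by
    intro B hB
    have hnot : insert a B ∉ Q.erase B :=
      fun h => hQa _ (Finset.mem_of_mem_erase h) (Finset.mem_insert_self a B)
    rw [Finset.card_insert_of_notMem hnot]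
    have := Finset.card_erase_add_one hB
    omega
  rw [hFdef]
  rw [Finset.sum_insert hXnot, Finset.sum_image hginj, hcard1]
  rw [Finset.sum_congr rfl (fun B hB => by rw [hcard2 B hB])]
  rw [Finset.sum_const, hm]
  simp only [Nat.add_sub_cancel, nsmul_eq_mul]
  push_cast [Nat.factorial_succ]
  ring

end Aux

lemma chi_eq (s : ℕ → ℂ) (hs0 : s 0 = 1) (d : ℕ) (hd : 2 ≤ d)
    (ih : ∀ m, m < d → s m = s 1 ^ m) :
    chi s d = s d - s 1 ^ d := by
  have hcard : (Finset.univ : Finset (Fin d)).card = d := by simp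
  have hne : (Finset.univ : Finset (Fin d)).Nonempty := by
    rw [← Finset.card_pos, hcard]; omega
  have hT : IsPartitionOf (Finset.univ : Finset (Fin d)) {Finset.univ} := by
    refine ⟨?_, ?_, ?_⟩
    · intro h
      exact hne.ne_empty (Finset.mem_singleton.mp h).symm
    · intro B hB
      rw [Finset.mem_singleton.mp hB]
    · intro x _
      refine ⟨Finset.univ, ⟨Finset.mem_singleton_self _, Finset.mem_univ x⟩, ?_⟩
      rintro E ⟨hE, _⟩
      exact Finset.mem_singleton.mp hE
  have hTmem : ({Finset.univ} : Finset (Finset (Fin d))) ∈ partitionsOf Finset.univ :=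
    mem_partitionsOf.mpr hT
  have key : ∀ P ∈ (partitionsOf (Finset.univ : Finset (Fin d))).erase {Finset.univ},
      ∏ B ∈ P, s B.card = s 1 ^ d := by
    intro P hP
    have hPp := mem_partitionsOf.mp (Finset.mem_of_mem_erase hP)
    have hblock : ∀ B ∈ P, B.card < d := by
      intro B hB
      have hle : B.card ≤ d :=
        le_trans (Finset.card_le_card (hPp.2.1 B hB)) (le_of_eq hcard)
      rcases lt_or_eq_of_le hle with h | h
      · exact h
      · exfalso
        have hBu : B = Finset.univ :=
          Finset.eq_of_subset_of_card_le (Finset.subset_univ B)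
            (le_trans (le_of_eq hcard) (le_of_eq h.symm))
        apply Finset.ne_of_mem_erase hP
        subst hBu
        ext C
        simp only [Finset.mem_singleton]
        constructor
        · intro hC
          obtain ⟨x, hx⟩ : C.Nonempty := Finset.nonempty_iff_ne_empty.mpr
            (fun h => hPp.1 (h ▸ hC))
          obtain ⟨D, _, hDu⟩ := hPp.2.2 x (Finset.mem_univ x)
          exact (hDu C ⟨hC, hx⟩).trans (hDu Finset.univ ⟨hB, Finset.mem_univ x⟩).symm
        · rintro rfl; exact hB
    calc ∏ B ∈ P, s B.card = ∏ B ∈ P, (s 1) ^ B.card :=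
          Finset.prod_congr rfl fun B hB => ih _ (hblock B hB)
      _ = s 1 ^ (∑ B ∈ P, B.card) := Finset.prod_pow_eq_pow_sum _ _ _
      _ = s 1 ^ d := by rw [sum_card_blocks hPp, hcard]
  have hZ := Zsum (Finset.univ : Finset (Fin d)) (by omega)
  rw [← Finset.add_sum_erase _ _ hTmem] at hZ
  unfold chi
  simp only [hs0, div_one]
  rw [← Finset.add_sum_erase _ _ hTmem]
  have h2 : ∑ P ∈ (partitionsOf (Finset.univ : Finset (Fin d))).erase {Finset.univ},
      (-1 : ℂ) ^ (P.card - 1) * ((P.card - 1).factorial : ℂ) * ∏ B ∈ P, s B.card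
      = (∑ P ∈ (partitionsOf (Finset.univ : Finset (Fin d))).erase {Finset.univ},
        (-1 : ℂ) ^ (P.card - 1) * ((P.card - 1).factorial : ℂ)) * s 1 ^ d := by
    rw [Finset.sum_mul]
    exact Finset.sum_congr rfl fun P hP => by rw [key P hP]
  rw [h2]
  have hc1 : ({Finset.univ} : Finset (Finset (Fin d))).card = 1 := Finset.card_singleton _
  rw [hc1] at hZ ⊢
  simp only [Nat.sub_self, pow_zero, Nat.factorial_zero, Nat.cast_one, mul_one, one_mul,
    Finset.prod_singleton, hcard] at hZ ⊢
  have : (∑ P ∈ (partitionsOf (Finset.univ : Finset (Fin d))).erase {Finset.univ},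
      (-1 : ℂ) ^ (P.card - 1) * ((P.card - 1).factorial : ℂ)) = -1 := by
    linear_combination hZ
  rw [this]
  ring

/-- for a signature `s` with `s 0 = 1`, the fingerprints `χ(d,s)` vanish for all
`d ≥ 2` if and only if `s n = s 1 ^ n` for every natural number `n`. -/
theorem stmt0 (s : ℕ → ℂ) (hs0 : s 0 = 1) :
    (∀ d : ℕ, 2 ≤ d → chi s d = 0) ↔ ∀ n : ℕ, s n = s 1 ^ n := by
  constructor
  · intro h n
    induction n using Nat.strong_induction_on with
    | _ n ih =>
      match n with
      | 0 => simpa using hs0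
      | 1 => simp
      | (k + 2) =>
        have hz := h (k + 2) (by omega)
        rw [chi_eq s hs0 (k + 2) (by omega) (fun m hm => ih m hm)] at hz
        exact sub_eq_zero.mp hz
  · intro h d hd
    rw [chi_eq s hs0 d hd (fun m _ => h m), h d, sub_self]
end

section
/- Let S₁ be a finite set and ℓ₂ ≥ 1. Let (F,ν_F,ξ_F) and (H,ν_H,ξ_H) be finite coloured graphs with vertex colourings into S₁ and injective edge colourings into {1,…,ℓ₂}. If (F,ν_F,ξ_F) and (H,ν_H,ξ_H) are not isomorphic as coloured graphs, then there exists a finite coloured graph (G,ν_G,ξ_G) with vertex colouring into S₁ and injective edge colouring into {1,…,ℓ₂} such that #Hom((F,ν_F,ξ_F) → (G,ν_G,ξ_G)) ≠ #Hom((H,ν_H,ξ_H) → (G,ν_G,ξ_G)). -/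
/-!
An endomorphism `σ` of a coloured graph with injective edge colouring maps every edge to the edge
of the same colour, i.e. to itself, so `σ ∘ σ` fixes every non-isolated vertex. If `F` and `H`
have the same homomorphism counts into `F` and into `H`, then (the identity being counted) there
are homomorphisms `φ : F → H` and `ψ : H → F`; applying this to `ψ ∘ φ` and `φ ∘ ψ` shows that `φ`
restricts to an isomorphism between the non-isolated parts. It remains to match the isolated
vertices colour by colour. A homomorphism from `F` is a homomorphism from its non-isolated part
together with a colour-preserving image of each isolated vertex. Into `F` padded with isolated
vertices so that colour class `t` has `p t` elements, for distinct primes `p t`, the second factor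
contributes `∏ p (ν v)` over isolated `v`, and unique factorisation recovers the number of isolated
vertices of each colour.
-/

/-- `φ` is a homomorphism of coloured graphs: a graph homomorphism preserving vertex
colours and edge colours. -/
def IsColHom {V₁ V₂ S₁ S₂ : Type*} (G₁ : SimpleGraph V₁) (ν₁ : V₁ → S₁) (ξ₁ : Sym2 V₁ → S₂)
    (G₂ : SimpleGraph V₂) (ν₂ : V₂ → S₁) (ξ₂ : Sym2 V₂ → S₂) (φ : V₁ → V₂) : Prop :=
  (∀ u v, G₁.Adj u v → G₂.Adj (φ u) (φ v)) ∧ (∀ v, ν₂ (φ v) = ν₁ v) ∧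
    ∀ u v, G₁.Adj u v → ξ₂ s(φ u, φ v) = ξ₁ s(u, v)

open Function

section

variable {U V W X S R : Type*}

namespace IsColHom

protected lemma id (G : SimpleGraph V) (ν : V → S) (ξ : Sym2 V → R) : IsColHom G ν ξ G ν ξ id :=
  ⟨fun _ _ h => h, fun _ => rfl, fun _ _ _ => rfl⟩

variable {G₁ : SimpleGraph U} {ν₁ : U → S} {ξ₁ : Sym2 U → R}
  {G₂ : SimpleGraph V} {ν₂ : V → S} {ξ₂ : Sym2 V → R}
  {G₃ : SimpleGraph W} {ν₃ : W → S} {ξ₃ : Sym2 W → R} {φ : U → V} {ψ : V → W}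

protected lemma comp (hψ : IsColHom G₂ ν₂ ξ₂ G₃ ν₃ ξ₃ ψ) (hφ : IsColHom G₁ ν₁ ξ₁ G₂ ν₂ ξ₂ φ) :
    IsColHom G₁ ν₁ ξ₁ G₃ ν₃ ξ₃ (ψ ∘ φ) :=
  ⟨fun u v h => hψ.1 _ _ (hφ.1 u v h), fun v => (hψ.2.1 _).trans (hφ.2.1 v),
    fun u v h => (hψ.2.2 _ _ (hφ.1 u v h)).trans (hφ.2.2 u v h)⟩

lemma subtype_val (G : SimpleGraph V) (ν : V → S) (ξ : Sym2 V → R) (s : Set V) :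
    IsColHom (G.comap ((↑) : s → V)) (ν ∘ (↑)) (ξ ∘ Sym2.map (↑)) G ν ξ (↑) :=
  ⟨fun _ _ h => h, fun _ => rfl, fun _ _ _ => rfl⟩

lemma mapsTo_support (hφ : IsColHom G₁ ν₁ ξ₁ G₂ ν₂ ξ₂ φ) : Set.MapsTo φ G₁.support G₂.support :=
  fun _ ⟨w, h⟩ => ⟨φ w, hφ.1 _ _ h⟩

lemma restrict_support (hφ : IsColHom G₁ ν₁ ξ₁ G₂ ν₂ ξ₂ φ) :
    IsColHom (G₁.comap ((↑) : G₁.support → U)) (ν₁ ∘ (↑)) (ξ₁ ∘ Sym2.map (↑))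
      (G₂.comap ((↑) : G₂.support → V)) (ν₂ ∘ (↑)) (ξ₂ ∘ Sym2.map (↑))
      (hφ.mapsTo_support.restrict φ _ _) :=
  ⟨fun _ _ h => hφ.1 _ _ h, fun _ => hφ.2.1 _, fun _ _ h => hφ.2.2 _ _ h⟩

lemma sym2_eq_of_injOn {σ : U → U} (hσ : IsColHom G₁ ν₁ ξ₁ G₁ ν₁ ξ₁ σ)
    (hξ : Set.InjOn ξ₁ G₁.edgeSet) {u v : U} (h : G₁.Adj u v) : s(σ u, σ v) = s(u, v) :=
  hξ (hσ.1 u v h) h (hσ.2.2 u v h)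

lemma apply_apply_of_mem_support {σ : U → U} (hσ : IsColHom G₁ ν₁ ξ₁ G₁ ν₁ ξ₁ σ)
    (hξ : Set.InjOn ξ₁ G₁.edgeSet) {u : U} (hu : u ∈ G₁.support) : σ (σ u) = u := by
  obtain ⟨v, h⟩ := hu
  rcases Sym2.eq_iff.1 (hσ.sym2_eq_of_injOn hξ h) with ⟨hσu, -⟩ | ⟨hσu, hσv⟩
  · rw [hσu, hσu]
  · rw [hσu, hσv]

end IsColHom

def IsColIso (G₁ : SimpleGraph V) (ν₁ : V → S) (ξ₁ : Sym2 V → R)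
    (G₂ : SimpleGraph W) (ν₂ : W → S) (ξ₂ : Sym2 W → R) (e : V ≃ W) : Prop :=
  IsColHom G₁ ν₁ ξ₁ G₂ ν₂ ξ₂ e ∧ IsColHom G₂ ν₂ ξ₂ G₁ ν₁ ξ₁ e.symm

lemma isColIso_comap_symm (G : SimpleGraph V) (ν : V → S) (ξ : Sym2 V → R) (e : V ≃ W) :
    IsColIso G ν ξ (G.comap e.symm) (ν ∘ e.symm) (ξ ∘ Sym2.map e.symm) e := by
  refine ⟨⟨fun u v h => ?_, fun v => ?_, fun u v h => ?_⟩, fun _ _ h => h, fun _ => rfl,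
    fun _ _ _ => rfl⟩ <;> simp_all

lemma injOn_comp_sym2Map {G : SimpleGraph V} {ξ : Sym2 V → R} (hξ : Set.InjOn ξ G.edgeSet)
    {f : W → V} (hf : Injective f) : Set.InjOn (ξ ∘ Sym2.map f) (G.comap f).edgeSet := by
  refine hξ.comp (Sym2.map.injective hf).injOn fun z hz => ?_
  induction z using Sym2.ind
  simpa using hz

section

variable {G₁ : SimpleGraph V} {ν₁ : V → S} {ξ₁ : Sym2 V → R}
  {G₂ : SimpleGraph W} {ν₂ : W → S} {ξ₂ : Sym2 W → R}

lemma card_colHom_congr_left {K : SimpleGraph X} {νK : X → S} {ξK : Sym2 X → R} {e : V ≃ W}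
    (he : IsColIso G₁ ν₁ ξ₁ G₂ ν₂ ξ₂ e) :
    Nat.card {φ : V → X // IsColHom G₁ ν₁ ξ₁ K νK ξK φ} =
      Nat.card {φ : W → X // IsColHom G₂ ν₂ ξ₂ K νK ξK φ} :=
  Nat.card_congr <| (e.arrowCongr (Equiv.refl X)).subtypeEquiv fun _ =>
    ⟨fun hφ => hφ.comp he.2, fun hφ => by convert hφ.comp he.1; ext; simp⟩

lemma card_colHom_congr_right {K : SimpleGraph U} {νK : U → S} {ξK : Sym2 U → R} {e : V ≃ W}
    (he : IsColIso G₁ ν₁ ξ₁ G₂ ν₂ ξ₂ e) :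
    Nat.card {φ : U → V // IsColHom K νK ξK G₁ ν₁ ξ₁ φ} =
      Nat.card {φ : U → W // IsColHom K νK ξK G₂ ν₂ ξ₂ φ} :=
  Nat.card_congr <| ((Equiv.refl U).arrowCongr e).subtypeEquiv fun _ =>
    ⟨fun hφ => he.1.comp hφ, fun hφ => by convert he.2.comp hφ; ext; simp⟩

lemma exists_isColIso_restrict_support (hξ₁ : Set.InjOn ξ₁ G₁.edgeSet)
    (hξ₂ : Set.InjOn ξ₂ G₂.edgeSet) {φ : V → W} {ψ : W → V}
    (hφ : IsColHom G₁ ν₁ ξ₁ G₂ ν₂ ξ₂ φ) (hψ : IsColHom G₂ ν₂ ξ₂ G₁ ν₁ ξ₁ ψ) :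
    ∃ e : G₁.support ≃ G₂.support,
      IsColIso (G₁.comap ((↑) : G₁.support → V)) (ν₁ ∘ (↑)) (ξ₁ ∘ Sym2.map (↑))
        (G₂.comap ((↑) : G₂.support → W)) (ν₂ ∘ (↑)) (ξ₂ ∘ Sym2.map (↑)) e := by
  have hψ' : IsColHom G₂ ν₂ ξ₂ G₁ ν₁ ξ₁ (ψ ∘ φ ∘ ψ) := hψ.comp (hφ.comp hψ)
  refine ⟨⟨hφ.mapsTo_support.restrict φ _ _, hψ'.mapsTo_support.restrict _ _ _,
    fun v => Subtype.ext ?_, fun w => Subtype.ext ?_⟩, hφ.restrict_support, hψ'.restrict_support⟩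
  · exact (hψ.comp hφ).apply_apply_of_mem_support hξ₁ v.2
  · exact (hφ.comp hψ).apply_apply_of_mem_support hξ₂ w.2

lemma isColHom_iff_restrict_support {K : SimpleGraph X} {νK : X → S} {ξK : Sym2 X → R}
    {φ : V → X} :
    IsColHom G₁ ν₁ ξ₁ K νK ξK φ ↔
      IsColHom (G₁.comap ((↑) : G₁.support → V)) (ν₁ ∘ (↑)) (ξ₁ ∘ Sym2.map (↑)) K νK ξK
        (φ ∘ (↑)) ∧ ∀ v : ↥G₁.supportᶜ, νK (φ v) = ν₁ v := by
  refine ⟨fun hφ => ⟨hφ.comp (.subtype_val G₁ ν₁ ξ₁ _), fun v => hφ.2.1 v⟩,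
    fun ⟨hφ, hν⟩ => ⟨fun u v h => ?_, fun v => ?_, fun u v h => ?_⟩⟩
  · exact hφ.1 ⟨u, v, h⟩ ⟨v, u, h.symm⟩ h
  · by_cases hv : v ∈ G₁.support
    · exact hφ.2.1 ⟨v, hv⟩
    · exact hν ⟨v, hv⟩
  · exact hφ.2.2 ⟨u, v, h⟩ ⟨v, u, h.symm⟩ h

open Classical in
lemma isColHom_sumCompl_congr {e₁ : G₁.support ≃ G₂.support}
    (he₁ : IsColHom (G₁.comap ((↑) : G₁.support → V)) (ν₁ ∘ (↑)) (ξ₁ ∘ Sym2.map (↑))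
        (G₂.comap ((↑) : G₂.support → W)) (ν₂ ∘ (↑)) (ξ₂ ∘ Sym2.map (↑)) e₁)
    {e₂ : ↥G₁.supportᶜ ≃ ↥G₂.supportᶜ} (he₂ : ∀ v, ν₂ (e₂ v) = ν₁ v) :
    IsColHom G₁ ν₁ ξ₁ G₂ ν₂ ξ₂
      ((Equiv.Set.sumCompl _).symm.trans ((e₁.sumCongr e₂).trans (Equiv.Set.sumCompl _))) := by
  refine isColHom_iff_restrict_support.2 ⟨?_, fun v => ?_⟩
  · convert (IsColHom.subtype_val G₂ ν₂ ξ₂ _).comp he₁ using 1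
    ext v
    simp
  · simpa using he₂ v

open Classical in
lemma exists_isColIso_of_restrict_support {e₁ : G₁.support ≃ G₂.support}
    (he₁ : IsColIso (G₁.comap ((↑) : G₁.support → V)) (ν₁ ∘ (↑)) (ξ₁ ∘ Sym2.map (↑))
        (G₂.comap ((↑) : G₂.support → W)) (ν₂ ∘ (↑)) (ξ₂ ∘ Sym2.map (↑)) e₁)
    (e₂ : ↥G₁.supportᶜ ≃ ↥G₂.supportᶜ) (he₂ : ∀ v, ν₂ (e₂ v) = ν₁ v) :
    ∃ e : V ≃ W, IsColIso G₁ ν₁ ξ₁ G₂ ν₂ ξ₂ e :=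
  ⟨_, isColHom_sumCompl_congr he₁.1 he₂,
    isColHom_sumCompl_congr he₁.2 fun w => by simpa using (he₂ (e₂.symm w)).symm⟩

open Classical in
lemma card_colHom_eq_mul (K : SimpleGraph X) (νK : X → S) (ξK : Sym2 X → R) :
    Nat.card {φ : V → X // IsColHom G₁ ν₁ ξ₁ K νK ξK φ} =
      Nat.card {φ : G₁.support → X //
          IsColHom (G₁.comap ((↑) : G₁.support → V)) (ν₁ ∘ (↑)) (ξ₁ ∘ Sym2.map (↑)) K νK ξK φ} *
        Nat.card ((v : ↥G₁.supportᶜ) → {x // νK x = ν₁ v}) := by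
  rw [← Nat.card_prod]
  exact Nat.card_congr <|
    ((Equiv.piEquivPiSubtypeProd (· ∈ G₁.support) fun _ => X).subtypeEquiv
      fun _ => isColHom_iff_restrict_support).trans <|
    Equiv.subtypeProdEquivProd.trans <| (Equiv.refl _).prodCongr Equiv.subtypePiEquivPi

end

section Padding

variable (G : SimpleGraph V) (ν : V → S) (ξ : Sym2 V → R) (μ : W → S) (r : R)

lemma isColHom_inl :
    IsColHom G ν ξ (G.map (.inl : V ↪ V ⊕ W)) (Sum.elim ν μ)
      (extend (Sym2.map Sum.inl) ξ fun _ => r) Sum.inl :=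
  ⟨fun u v h => (SimpleGraph.map_adj .inl G _ _).2 ⟨u, v, h, rfl, rfl⟩, fun _ => rfl,
    fun u v _ => (Sym2.map.injective Sum.inl_injective).extend_apply ξ _ s(u, v)⟩

lemma injOn_extend_sym2Map_inl {ξ : Sym2 V → R} (hξ : Set.InjOn ξ G.edgeSet) :
    Set.InjOn (extend (Sym2.map Sum.inl) ξ fun _ => r) (G.map (.inl : V ↪ V ⊕ W)).edgeSet := by
  rw [SimpleGraph.edgeSet_map]
  rintro _ ⟨z, hz, rfl⟩ _ ⟨z', hz', rfl⟩ h
  simp only [Function.Embedding.sym2Map_apply, Function.Embedding.inl_apply,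
    (Sym2.map.injective Sum.inl_injective).extend_apply] at h
  rw [hξ hz hz' h]

lemma card_fiber_sumElim [Finite V] [Finite W] (t : S) :
    Nat.card {x // Sum.elim ν μ x = t} = Nat.card {v // ν v = t} + Nat.card {w // μ w = t} := by
  rw [Nat.card_congr Equiv.subtypeSum, Nat.card_sum]
  rfl

end Padding

lemma exists_injective_prime_ge [Finite S] (N : ℕ) :
    ∃ p : S → ℕ, Injective p ∧ ∀ t, (p t).Prime ∧ N ≤ p t := by
  obtain ⟨i, hi⟩ := Countable.exists_injective_nat S
  have hmono : StrictMono (Nat.nth Nat.Prime) := Nat.nth_strictMono Nat.infinite_setOfPred_prime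
  refine ⟨fun t => Nat.nth Nat.Prime (N + i t), fun a b h => hi (by simpa using hmono.injective h),
    fun t => ⟨Nat.prime_nth_prime _, (Nat.le_add_right _ _).trans hmono.le_apply⟩⟩

lemma factorization_prod_apply_eq_card_fiber {ι : Type*} [Fintype ι] {p : S → ℕ}
    (hp : ∀ t, (p t).Prime) (hinj : Injective p) (f : ι → S) (s : S) :
    (∏ i, p (f i)).factorization (p s) = Nat.card {i // f i = s} := by
  classical
  rw [Nat.factorization_prod fun i _ => (hp (f i)).ne_zero, Finsupp.finsetSum_apply,
    Nat.card_eq_fintype_card, Fintype.card_subtype, Finset.card_filter]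
  refine Finset.sum_congr rfl fun i _ => ?_
  simp [(hp (f i)).factorization, Finsupp.single_apply, hinj.eq_iff, eq_comm]

lemma exists_equiv_of_card_fiber_eq {A B : Type*} [Finite A] [Finite B] {f : A → S} {g : B → S}
    (h : ∀ t, Nat.card {a // f a = t} = Nat.card {b // g b = t}) :
    ∃ e : A ≃ B, ∀ a, g (e a) = f a := by
  have e t := (Finite.card_eq.1 (h t)).some
  exact ⟨(Equiv.sigmaFiberEquiv f).symm.trans ((Equiv.sigmaCongrRight e).trans
    (Equiv.sigmaFiberEquiv g)), fun a => (e (f a) ⟨a, rfl⟩).2⟩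

def ColHomIndistinguishable (G₁ : SimpleGraph V) (ν₁ : V → S) (ξ₁ : Sym2 V → R)
    (G₂ : SimpleGraph W) (ν₂ : W → S) (ξ₂ : Sym2 W → R) : Prop :=
  ∀ (n : ℕ) (K : SimpleGraph (Fin n)) (νK : Fin n → S) (ξK : Sym2 (Fin n) → R),
    Set.InjOn ξK K.edgeSet →
      Nat.card {φ : V → Fin n // IsColHom G₁ ν₁ ξ₁ K νK ξK φ} =
        Nat.card {φ : W → Fin n // IsColHom G₂ ν₂ ξ₂ K νK ξK φ}

namespace ColHomIndistinguishable

variable {G₁ : SimpleGraph V} {ν₁ : V → S} {ξ₁ : Sym2 V → R}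
  {G₂ : SimpleGraph W} {ν₂ : W → S} {ξ₂ : Sym2 W → R}

lemma symm (h : ColHomIndistinguishable G₁ ν₁ ξ₁ G₂ ν₂ ξ₂) :
    ColHomIndistinguishable G₂ ν₂ ξ₂ G₁ ν₁ ξ₁ :=
  fun n K νK ξK hK => (h n K νK ξK hK).symm

lemma card_eq (h : ColHomIndistinguishable G₁ ν₁ ξ₁ G₂ ν₂ ξ₂) [Finite X] {K : SimpleGraph X}
    {νK : X → S} {ξK : Sym2 X → R} (hK : Set.InjOn ξK K.edgeSet) :
    Nat.card {φ : V → X // IsColHom G₁ ν₁ ξ₁ K νK ξK φ} =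
      Nat.card {φ : W → X // IsColHom G₂ ν₂ ξ₂ K νK ξK φ} := by
  have := Fintype.ofFinite X
  have he := isColIso_comap_symm K νK ξK (Fintype.equivFin X)
  rw [card_colHom_congr_right he, card_colHom_congr_right he]
  exact h _ _ _ _ (injOn_comp_sym2Map hK (Fintype.equivFin X).symm.injective)

lemma nonempty_colHom (h : ColHomIndistinguishable G₁ ν₁ ξ₁ G₂ ν₂ ξ₂) [Finite V] [Finite W]
    (hξ₁ : Set.InjOn ξ₁ G₁.edgeSet) :
    Nonempty {ψ : W → V // IsColHom G₂ ν₂ ξ₂ G₁ ν₁ ξ₁ ψ} := by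
  have : Nonempty {φ : V → V // IsColHom G₁ ν₁ ξ₁ G₁ ν₁ ξ₁ φ} := ⟨⟨id, .id G₁ ν₁ ξ₁⟩⟩
  have hpos : 0 < Nat.card {φ : V → V // IsColHom G₁ ν₁ ξ₁ G₁ ν₁ ξ₁ φ} := Nat.card_pos
  rw [h.card_eq hξ₁] at hpos
  exact (Nat.card_pos_iff.1 hpos).1

lemma card_fiber_compl_support_eq (h : ColHomIndistinguishable G₁ ν₁ ξ₁ G₂ ν₂ ξ₂)
    [Fintype V] [Fintype W] [Finite S]
    (hξ₁ : Set.InjOn ξ₁ G₁.edgeSet) (r : R) {e : G₁.support ≃ G₂.support}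
    (he : IsColIso (G₁.comap ((↑) : G₁.support → V)) (ν₁ ∘ (↑)) (ξ₁ ∘ Sym2.map (↑))
        (G₂.comap ((↑) : G₂.support → W)) (ν₂ ∘ (↑)) (ξ₂ ∘ Sym2.map (↑)) e) (s : S) :
    Nat.card {v : ↥G₁.supportᶜ // ν₁ v = s} = Nat.card {w : ↥G₂.supportᶜ // ν₂ w = s} := by
  classical
  obtain ⟨p, hinj, hp⟩ := exists_injective_prime_ge (S := S) (Nat.card V)
  let m t := p t - Nat.card {v // ν₁ v = t}
  -- the target is `G₁` padded with isolated vertices until colour class `t` has `p t` elements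
  let μ : (Σ t, Fin (m t)) → S := Sigma.fst
  have hK t : Nat.card {x // Sum.elim ν₁ μ x = t} = p t := by
    rw [card_fiber_sumElim, Nat.card_congr (Equiv.sigmaSubtype t), Nat.card_fin]
    exact Nat.add_sub_cancel' ((Finite.card_subtype_le _).trans (hp t).2)
  have hcount := h.card_eq (νK := Sum.elim ν₁ μ) (injOn_extend_sym2Map_inl G₁ r hξ₁)
  rw [card_colHom_eq_mul (G₁ := G₁), card_colHom_eq_mul (G₁ := G₂), ← card_colHom_congr_left he,
    Nat.card_pi, Nat.card_pi] at hcount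
  simp only [hK] at hcount
  have hincl := (isColHom_inl G₁ ν₁ ξ₁ μ r).comp (.subtype_val G₁ ν₁ ξ₁ G₁.support)
  have hprod :=
    Nat.eq_of_mul_eq_mul_left (Nat.card_pos_iff.2 ⟨⟨⟨_, hincl⟩⟩, inferInstance⟩) hcount
  rw [← factorization_prod_apply_eq_card_fiber (fun t => (hp t).1) hinj,
    ← factorization_prod_apply_eq_card_fiber (fun t => (hp t).1) hinj, hprod]

end ColHomIndistinguishable

end

/-- if two finite coloured graphs with injective edge colourings are not
isomorphic as coloured graphs, then some finite coloured graph (with injective edge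
colouring) distinguishes them by homomorphism counts. -/
theorem stmt10 {V_F V_H S₁ : Type*} [Fintype V_F] [Fintype V_H] [Finite S₁]
    (ℓ₂ : ℕ) (hℓ : 1 ≤ ℓ₂)
    (F : SimpleGraph V_F) (νF : V_F → S₁) (ξF : Sym2 V_F → Fin ℓ₂)
    (H : SimpleGraph V_H) (νH : V_H → S₁) (ξH : Sym2 V_H → Fin ℓ₂)
    (hF : Set.InjOn ξF F.edgeSet) (hH : Set.InjOn ξH H.edgeSet)
    (hnoiso : ¬ ∃ e : V_F ≃ V_H,
        IsColHom F νF ξF H νH ξH e ∧ IsColHom H νH ξH F νF ξF e.symm) :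
    ∃ (n : ℕ) (G : SimpleGraph (Fin n)) (νG : Fin n → S₁) (ξG : Sym2 (Fin n) → Fin ℓ₂),
      Set.InjOn ξG G.edgeSet ∧
        Nat.card {φ : V_F → Fin n // IsColHom F νF ξF G νG ξG φ} ≠
          Nat.card {φ : V_H → Fin n // IsColHom H νH ξH G νG ξG φ} := by
  by_contra! hsame
  replace hsame : ColHomIndistinguishable F νF ξF H νH ξH := hsame
  obtain ⟨ψ, hψ⟩ := hsame.nonempty_colHom hF
  obtain ⟨φ, hφ⟩ := hsame.symm.nonempty_colHom hH
  obtain ⟨e₁, he₁⟩ := exists_isColIso_restrict_support hF hH hφ hψ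
  obtain ⟨e₂, he₂⟩ :=
    exists_equiv_of_card_fiber_eq (hsame.card_fiber_compl_support_eq hF ⟨0, hℓ⟩ he₁)
  exact hnoiso (exists_isColIso_of_restrict_support he₁ e₂ he₂)
end

section
/- Let S ⊆ ℕ satisfy 0 ∈ S, S ≠ {0}, and S ≠ ℕ, and let s : ℕ → ℂ be the indicator signature of S, i.e., s(n) = 1 if n ∈ S and s(n) = 0 otherwise (so s(0) = 1). Then there exists an integer d ≥ 3 such that χ(d,s) ≠ 0 (i.e., the signature set {s} is of type T[∞]). -/
open Finset

namespace Stmt15Aux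

variable {α : Type*} [DecidableEq α]

noncomputable def Cf (f : ℕ → ℂ) (t : Finset α) : ℂ :=
  ∑ P ∈ partitionsOf t, (-1 : ℂ) ^ P.card * (P.card.factorial : ℂ) * ∏ B ∈ P, f B.card

noncomputable def Af (f : ℕ → ℂ) (t : Finset α) : ℂ :=
  ∑ P ∈ partitionsOf t,
    (-1 : ℂ) ^ (P.card - 1) * ((P.card - 1).factorial : ℂ) * ∏ B ∈ P, f B.card

noncomputable def gC (f : ℕ → ℂ) : ℕ → ℂ
  | 0 => 1
  | (n+1) => -∑ k ∈ Finset.range (n+1), (((n+1).choose (k+1) : ℕ) : ℂ) * (f (k+1) * gC f (n - k))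
  decreasing_by omega

lemma mem_partitionsOf {t : Finset α} {P : Finset (Finset α)} :
    P ∈ partitionsOf t ↔ IsPartitionOf t P := by
  classical
  constructor
  · intro h
    exact (Finset.mem_filter.1 h).2
  · intro h
    refine Finset.mem_filter.2 ⟨?_, h⟩
    rw [Finset.mem_powerset]
    intro B hB
    exact Finset.mem_powerset.2 (h.2.1 B hB)

lemma partitionsOf_empty : partitionsOf (∅ : Finset α) = {(∅ : Finset (Finset α))} := by
  ext P
  rw [mem_partitionsOf, Finset.mem_singleton]
  constructor
  · rintro ⟨h0, hsub, _⟩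
    by_contra hP
    obtain ⟨B, hB⟩ := Finset.nonempty_iff_ne_empty.2 hP
    exact h0 ((Finset.subset_empty.1 (hsub B hB)) ▸ hB)
  · rintro rfl
    exact ⟨by simp, by simp, by simp⟩
lemma isPartitionOf_insert {t B : Finset α} (hBne : B.Nonempty) (hBt : B ⊆ t)
    {Q : Finset (Finset α)} (hQ : IsPartitionOf (t \ B) Q) :
    IsPartitionOf t (insert B Q) := by
  obtain ⟨hQ0, hQsub, hQcov⟩ := hQ
  refine ⟨?_, ?_, ?_⟩
  · simp only [Finset.mem_insert, not_or]
    exact ⟨fun h => hBne.ne_empty h.symm, hQ0⟩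
  · intro C hC
    rcases Finset.mem_insert.1 hC with rfl | hC
    · exact hBt
    · exact (hQsub C hC).trans Finset.sdiff_subset
  · intro a ha
    by_cases hab : a ∈ B
    · refine ⟨B, ⟨Finset.mem_insert_self _ _, hab⟩, ?_⟩
      rintro C ⟨hC, haC⟩
      rcases Finset.mem_insert.1 hC with rfl | hC
      · rfl
      · exact absurd ((Finset.mem_sdiff.1 (hQsub C hC haC)).2) (by simp [hab])
    · have ha' : a ∈ t \ B := Finset.mem_sdiff.2 ⟨ha, hab⟩
      obtain ⟨C0, ⟨hC0Q, haC0⟩, huniq⟩ := hQcov a ha'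
      refine ⟨C0, ⟨Finset.mem_insert_of_mem hC0Q, haC0⟩, ?_⟩
      rintro C ⟨hC, haC⟩
      rcases Finset.mem_insert.1 hC with rfl | hC
      · exact absurd haC hab
      · exact huniq C ⟨hC, haC⟩

lemma notMem_of_isPartitionOf_sdiff {t B : Finset α} (hBne : B.Nonempty)
    {Q : Finset (Finset α)} (hQ : IsPartitionOf (t \ B) Q) : B ∉ Q := by
  intro hB
  obtain ⟨x, hx⟩ := hBne
  exact (Finset.mem_sdiff.1 (hQ.2.1 B hB hx)).2 hx

lemma erase_isPartitionOf {t B : Finset α} {P : Finset (Finset α)}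
    (hP : IsPartitionOf t P) (hB : B ∈ P) :
    IsPartitionOf (t \ B) (P.erase B) := by
  obtain ⟨hP0, hPsub, hPcov⟩ := hP
  refine ⟨fun h => hP0 (Finset.mem_of_mem_erase h), ?_, ?_⟩
  · intro C hC
    have hCP := Finset.mem_of_mem_erase hC
    have hCB : C ≠ B := Finset.ne_of_mem_erase hC
    intro a haC
    refine Finset.mem_sdiff.2 ⟨hPsub C hCP haC, fun haB => ?_⟩
    obtain ⟨D, _, hD⟩ := hPcov a (hPsub C hCP haC)
    exact hCB ((hD C ⟨hCP, haC⟩).trans (hD B ⟨hB, haB⟩).symm)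
  · intro a ha
    obtain ⟨haT, haB⟩ := Finset.mem_sdiff.1 ha
    obtain ⟨C, ⟨hCP, haC⟩, huniq⟩ := hPcov a haT
    have hCB : C ≠ B := fun h => haB (h ▸ haC)
    exact ⟨C, ⟨Finset.mem_erase.2 ⟨hCB, hCP⟩, haC⟩,
      fun D hD => huniq D ⟨Finset.mem_of_mem_erase hD.1, hD.2⟩⟩

lemma filter_partitionsOf_eq {t B : Finset α} (hBne : B.Nonempty) (hBt : B ⊆ t) :
    (partitionsOf t).filter (fun P => B ∈ P) = (partitionsOf (t \ B)).image (insert B) := by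
  ext P
  simp only [Finset.mem_filter, Finset.mem_image, mem_partitionsOf]
  constructor
  · rintro ⟨hP, hBP⟩
    exact ⟨P.erase B, erase_isPartitionOf hP hBP, Finset.insert_erase hBP⟩
  · rintro ⟨Q, hQ, rfl⟩
    exact ⟨isPartitionOf_insert hBne hBt hQ, Finset.mem_insert_self _ _⟩

lemma sum_filter_partitionsOf (g : Finset (Finset α) → ℂ) {t B : Finset α}
    (hBne : B.Nonempty) (hBt : B ⊆ t) :
    ∑ P ∈ (partitionsOf t).filter (fun P => B ∈ P), g P
      = ∑ Q ∈ partitionsOf (t \ B), g (insert B Q) := by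
  rw [filter_partitionsOf_eq hBne hBt]
  refine Finset.sum_image ?_
  intro Q1 h1 Q2 h2 he
  have hB1 : B ∉ Q1 := notMem_of_isPartitionOf_sdiff hBne (mem_partitionsOf.1 h1)
  have hB2 : B ∉ Q2 := notMem_of_isPartitionOf_sdiff hBne (mem_partitionsOf.1 h2)
  rw [← Finset.erase_insert hB1, ← Finset.erase_insert hB2, he]
lemma partition_nonempty {t : Finset α} (ht : t.Nonempty) {P : Finset (Finset α)}
    (hP : P ∈ partitionsOf t) : P.Nonempty := by
  obtain ⟨x, hx⟩ := ht
  obtain ⟨B, ⟨hB, _⟩, _⟩ := (mem_partitionsOf.1 hP).2.2 x hx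
  exact ⟨B, hB⟩

lemma Cf_rec (f : ℕ → ℂ) {t : Finset α} (ht : t.Nonempty) :
    Cf f t = -∑ B ∈ t.powerset.erase ∅, f B.card * Cf f (t \ B) := by
  classical
  have step1 : Cf f t = ∑ P ∈ partitionsOf t, ∑ B ∈ P,
      (-1 : ℂ) ^ P.card * ((P.card - 1).factorial : ℂ) * ∏ C ∈ P, f C.card := by
    unfold Cf
    refine Finset.sum_congr rfl fun P hP => ?_
    rw [Finset.sum_const, nsmul_eq_mul]
    have h1 : 1 ≤ P.card := Finset.card_pos.2 (partition_nonempty ht hP)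
    have hfac : (P.card.factorial : ℂ) = (P.card : ℂ) * ((P.card - 1).factorial : ℂ) := by
      have h2 : P.card - 1 + 1 = P.card := Nat.succ_pred_eq_of_pos h1
      rw [← h2, Nat.factorial_succ]
      push_cast
      ring
    rw [hfac]; ring
  have subU : ∀ P ∈ partitionsOf t, P ⊆ t.powerset.erase ∅ := by
    intro P hP B hB
    have h := mem_partitionsOf.1 hP
    exact Finset.mem_erase.2 ⟨fun h0 => h.1 (h0 ▸ hB), Finset.mem_powerset.2 (h.2.1 B hB)⟩
  have step2 : Cf f t = ∑ B ∈ t.powerset.erase ∅,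
      ∑ P ∈ (partitionsOf t).filter (fun P => B ∈ P),
        (-1 : ℂ) ^ P.card * ((P.card - 1).factorial : ℂ) * ∏ C ∈ P, f C.card := by
    rw [step1]
    have : ∀ P ∈ partitionsOf t,
        (∑ B ∈ P, (-1 : ℂ) ^ P.card * ((P.card - 1).factorial : ℂ) * ∏ C ∈ P, f C.card)
        = ∑ B ∈ t.powerset.erase ∅, if B ∈ P then
            (-1 : ℂ) ^ P.card * ((P.card - 1).factorial : ℂ) * ∏ C ∈ P, f C.card else 0 := by
      intro P hP
      rw [Finset.sum_ite_mem, Finset.inter_eq_right.2 (subU P hP)]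
    rw [Finset.sum_congr rfl this, Finset.sum_comm]
    refine Finset.sum_congr rfl fun B _ => ?_
    rw [Finset.sum_filter]
  rw [step2, ← Finset.sum_neg_distrib]
  refine Finset.sum_congr rfl fun B hB => ?_
  have hBne : B.Nonempty := Finset.nonempty_iff_ne_empty.2 (Finset.mem_erase.1 hB).1
  have hBt : B ⊆ t := Finset.mem_powerset.1 (Finset.mem_of_mem_erase hB)
  rw [sum_filter_partitionsOf _ hBne hBt]
  unfold Cf
  rw [Finset.mul_sum, ← Finset.sum_neg_distrib]
  refine Finset.sum_congr rfl fun Q hQ => ?_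
  have hBQ : B ∉ Q := notMem_of_isPartitionOf_sdiff hBne (mem_partitionsOf.1 hQ)
  rw [Finset.card_insert_of_notMem hBQ, Finset.prod_insert hBQ]
  simp only [Nat.add_sub_cancel]
  rw [pow_succ]
  ring
lemma xblock_spec {t : Finset α} {P : Finset (Finset α)} (hP : P ∈ partitionsOf t)
    {x : α} (hx : x ∈ t) :
    ∃ B₀, B₀ ∈ P ∧ x ∈ B₀ ∧ (P.filter (fun B => x ∈ B)).biUnion id = B₀ ∧
      (∀ C, C ∈ P → x ∈ C → C = B₀) := by
  obtain ⟨B₀, ⟨hB₀, hxB₀⟩, huniq⟩ := (mem_partitionsOf.1 hP).2.2 x hx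
  have hfil : P.filter (fun B => x ∈ B) = {B₀} := by
    ext C
    simp only [Finset.mem_filter, Finset.mem_singleton]
    constructor
    · rintro ⟨h1, h2⟩; exact huniq C ⟨h1, h2⟩
    · rintro rfl; exact ⟨hB₀, hxB₀⟩
  refine ⟨B₀, hB₀, hxB₀, ?_, fun C h1 h2 => huniq C ⟨h1, h2⟩⟩
  rw [hfil, Finset.singleton_biUnion]
  rfl

lemma Af_rec (f : ℕ → ℂ) {t : Finset α} {x : α} (hx : x ∈ t) :
    Af f t = ∑ B' ∈ (t.erase x).powerset, f (B'.card + 1) * Cf f (t \ insert x B') := by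
  classical
  have hmaps : ∀ P ∈ partitionsOf t,
      ((P.filter (fun B => x ∈ B)).biUnion id).erase x ∈ (t.erase x).powerset := by
    intro P hP
    obtain ⟨B₀, hB₀, hxB₀, hbi, _⟩ := xblock_spec hP hx
    rw [hbi]
    exact Finset.mem_powerset.2
      (Finset.erase_subset_erase x ((mem_partitionsOf.1 hP).2.1 B₀ hB₀))
  rw [Af, ← Finset.sum_fiberwise_of_maps_to hmaps]
  refine Finset.sum_congr rfl fun B' hB' => ?_
  have hB'sub : B' ⊆ t.erase x := Finset.mem_powerset.1 hB'
  have hxB' : x ∉ B' := fun h => Finset.notMem_erase x t (hB'sub h)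
  have hBt : insert x B' ⊆ t :=
    Finset.insert_subset hx (hB'sub.trans (Finset.erase_subset x t))
  have hfeq : (partitionsOf t).filter
        (fun P => ((P.filter (fun B => x ∈ B)).biUnion id).erase x = B')
      = (partitionsOf t).filter (fun P => insert x B' ∈ P) := by
    refine Finset.filter_congr fun P hP => ?_
    obtain ⟨B₀, hB₀, hxB₀, hbi, huniq⟩ := xblock_spec hP hx
    rw [hbi]
    constructor
    · rintro rfl
      rwa [Finset.insert_erase hxB₀]
    · intro hmem
      have : insert x B' = B₀ := huniq _ hmem (Finset.mem_insert_self x B')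
      rw [← this, Finset.erase_insert hxB']
  rw [hfeq, sum_filter_partitionsOf _ ⟨x, Finset.mem_insert_self x B'⟩ hBt]
  unfold Cf
  rw [Finset.mul_sum]
  refine Finset.sum_congr rfl fun Q hQ => ?_
  have hBQ : insert x B' ∉ Q :=
    notMem_of_isPartitionOf_sdiff ⟨x, Finset.mem_insert_self x B'⟩ (mem_partitionsOf.1 hQ)
  rw [Finset.card_insert_of_notMem hBQ, Finset.prod_insert hBQ,
    Finset.card_insert_of_notMem hxB']
  simp only [Nat.add_sub_cancel]
  ring
lemma Cf_empty (f : ℕ → ℂ) : Cf f (∅ : Finset α) = 1 := by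
  unfold Cf
  rw [partitionsOf_empty, Finset.sum_singleton]
  simp

lemma gC_zero (f : ℕ → ℂ) : gC f 0 = 1 := by simp [gC]

lemma gC_one (f : ℕ → ℂ) : gC f 1 = -f 1 := by
  rw [gC]
  simp [gC_zero]

lemma gC_two (f : ℕ → ℂ) : gC f 2 = 2 * f 1 * f 1 - f 2 := by
  rw [gC]
  rw [Finset.sum_range_succ, Finset.sum_range_succ, Finset.sum_range_zero]
  norm_num [gC_one, gC_zero]
  ring

lemma gC_three (f : ℕ → ℂ) : gC f 3 = -(6 * f 1 * f 1 * f 1) + 6 * f 1 * f 2 - f 3 := by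
  rw [gC]
  rw [Finset.sum_range_succ, Finset.sum_range_succ, Finset.sum_range_succ,
    Finset.sum_range_zero]
  norm_num [gC_one, gC_two, gC_zero]
  ring

lemma Cf_eq_gC (f : ℕ → ℂ) (t : Finset α) : Cf f t = gC f t.card := by
  classical
  suffices H : ∀ n (t : Finset α), t.card = n → Cf f t = gC f n from H _ t rfl
  intro n
  induction n using Nat.strong_induction_on with
  | _ n ih =>
    intro t ht
    match n, ht with
    | 0, ht =>
      rw [Finset.card_eq_zero.1 ht, Cf_empty, gC_zero]
    | (m+1), ht =>
      have htne : t.Nonempty := Finset.card_pos.1 (by omega)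
      rw [Cf_rec f htne]
      have hcongr : ∀ B ∈ t.powerset.erase ∅,
          f B.card * Cf f (t \ B) = f B.card * gC f (m + 1 - B.card) := by
        intro B hB
        have hBne : B.Nonempty := Finset.nonempty_iff_ne_empty.2 (Finset.mem_erase.1 hB).1
        have hBt : B ⊆ t := Finset.mem_powerset.1 (Finset.mem_of_mem_erase hB)
        have hcard : (t \ B).card = m + 1 - B.card := by rw [Finset.card_sdiff_of_subset hBt, ht]
        have hlt : m + 1 - B.card < m + 1 := by
          have : 1 ≤ B.card := Finset.card_pos.2 hBne
          omega
        rw [ih _ hlt _ hcard]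
      rw [Finset.sum_congr rfl hcongr]
      have herase : ∑ B ∈ t.powerset.erase ∅, f B.card * gC f (m + 1 - B.card)
          = (∑ B ∈ t.powerset, f B.card * gC f (m + 1 - B.card))
            - f 0 * gC f (m + 1) := by
        rw [Finset.sum_erase_eq_sub (Finset.empty_mem_powerset t)]
        simp
      rw [herase, Finset.sum_powerset_apply_card (fun j => f j * gC f (m + 1 - j)), ht,
        Finset.sum_range_succ']
      simp only [Nat.choose_zero_right, one_smul, Nat.sub_zero, nsmul_eq_mul,
        add_sub_cancel_right]
      rw [gC]
      congr 1
      refine Finset.sum_congr rfl fun k hk => ?_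
      have h2 : m + 1 - (k + 1) = m - k := by omega
      rw [h2]
lemma Af_eq_sum (f : ℕ → ℂ) {t : Finset α} {x : α} (hx : x ∈ t) :
    Af f t = ∑ k ∈ Finset.range t.card,
      ((t.card - 1).choose k : ℂ) * (f (k + 1) * gC f (t.card - 1 - k)) := by
  classical
  rw [Af_rec f hx]
  have hcongr : ∀ B' ∈ (t.erase x).powerset,
      f (B'.card + 1) * Cf f (t \ insert x B')
        = f (B'.card + 1) * gC f (t.card - 1 - B'.card) := by
    intro B' hB'
    have hB'sub : B' ⊆ t.erase x := Finset.mem_powerset.1 hB'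
    have hxB' : x ∉ B' := fun h => Finset.notMem_erase x t (hB'sub h)
    have hBt : insert x B' ⊆ t :=
      Finset.insert_subset hx (hB'sub.trans (Finset.erase_subset x t))
    rw [Cf_eq_gC, Finset.card_sdiff_of_subset hBt, Finset.card_insert_of_notMem hxB']
    congr 2
    omega
  rw [Finset.sum_congr rfl hcongr,
    Finset.sum_powerset_apply_card (fun j => f (j + 1) * gC f (t.card - 1 - j)),
    Finset.card_erase_of_mem hx]
  have h1 : 1 ≤ t.card := Finset.card_pos.2 ⟨x, hx⟩
  have h2 : t.card - 1 + 1 = t.card := by omega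
  rw [h2]
  refine Finset.sum_congr rfl fun k _ => ?_
  rw [nsmul_eq_mul]

lemma alt_sum (n : ℕ) (hn : n ≠ 0) :
    ∑ i ∈ Finset.range (n + 1), (-1 : ℂ) ^ i * (n.choose i : ℂ) = 0 := by
  have h := Int.alternating_sum_range_choose_of_ne hn
  have := congrArg (fun z : ℤ => (z : ℂ)) h
  push_cast at this
  simpa using this

lemma neg_one_pow_sub {n k : ℕ} (hk : k ≤ n) :
    (-1 : ℂ) ^ (n - k) = (-1) ^ n * (-1) ^ k := by
  have h : (-1 : ℂ) ^ n = (-1) ^ (n - k) * (-1) ^ k := by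
    rw [← pow_add]
    congr 1
    omega
  rw [h, mul_assoc, ← mul_pow]
  norm_num

lemma gC_neg_one (f : ℕ → ℂ) : ∀ n, (∀ j, 1 ≤ j → j ≤ n → f j = 1) → gC f n = (-1) ^ n := by
  intro n
  induction n using Nat.strong_induction_on with
  | _ n ih =>
    match n with
    | 0 => intro _; rw [gC_zero]; norm_num
    | (m+1) =>
      intro hf
      rw [gC]
      have hterm : ∀ k ∈ Finset.range (m + 1),
          (((m + 1).choose (k + 1) : ℕ) : ℂ) * (f (k + 1) * gC f (m - k))
            = -((-1) ^ m * ((-1) ^ (k + 1) * (((m + 1).choose (k + 1) : ℕ) : ℂ))) := by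
        intro k hk
        have hkm : k ≤ m := by
          have := Finset.mem_range.1 hk; omega
        have hf1 : f (k + 1) = 1 := hf _ (by omega) (by omega)
        have hg : gC f (m - k) = (-1) ^ (m - k) := by
          refine ih (m - k) (by omega) fun j h1 h2 => hf j h1 (by omega)
        rw [hf1, hg, neg_one_pow_sub hkm]
        rw [pow_succ]
        ring
      rw [Finset.sum_congr rfl hterm]
      have hsum : ∑ k ∈ Finset.range (m + 1),
          (-1 : ℂ) ^ (k + 1) * (((m + 1).choose (k + 1) : ℕ) : ℂ) = -1 := by
        have h := alt_sum (m + 1) (by omega)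
        rw [Finset.sum_range_succ'] at h
        simp only [pow_zero, Nat.choose_zero_right, Nat.cast_one, one_mul] at h
        linear_combination h
      simp only [Finset.sum_neg_distrib, ← Finset.mul_sum, hsum]
      ring
lemma Af_case4 (f : ℕ → ℂ) (p : ℕ) (hp : 2 ≤ p)
    (hf1 : ∀ j, 1 ≤ j → j ≤ p → f j = 1) (hfm : f (p + 1) = 0) :
    Af f (Finset.univ : Finset (Fin (p + 1))) = -1 := by
  rw [Af_eq_sum f (Finset.mem_univ (0 : Fin (p + 1))), Finset.card_univ, Fintype.card_fin]
  simp only [Nat.add_sub_cancel]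
  rw [Finset.sum_range_succ, hfm]
  simp only [zero_mul, mul_zero, add_zero]
  have hterm : ∀ k ∈ Finset.range p,
      (p.choose k : ℂ) * (f (k + 1) * gC f (p - k))
        = (-1) ^ p * ((-1) ^ k * (p.choose k : ℂ)) := by
    intro k hk
    have hkp : k < p := Finset.mem_range.1 hk
    rw [hf1 (k + 1) (by omega) (by omega),
      gC_neg_one f (p - k) (fun j h1 h2 => hf1 j h1 (by omega)),
      neg_one_pow_sub (by omega : k ≤ p)]
    ring
  rw [Finset.sum_congr rfl hterm, ← Finset.mul_sum]
  have halt := alt_sum p (by omega)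
  rw [Finset.sum_range_succ, Nat.choose_self, Nat.cast_one, mul_one] at halt
  have hsum : ∑ k ∈ Finset.range p, (-1 : ℂ) ^ k * (p.choose k : ℂ) = -(-1) ^ p := by
    linear_combination halt
  rw [hsum, mul_neg, ← mul_pow]
  norm_num

lemma Af_case1 (f : ℕ → ℂ) (p : ℕ)
    (hf0 : ∀ j, 1 ≤ j → j ≤ p → f j = 0) :
    Af f (Finset.univ : Finset (Fin (p + 1))) = f (p + 1) := by
  rw [Af_eq_sum f (Finset.mem_univ (0 : Fin (p + 1))), Finset.card_univ, Fintype.card_fin]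
  simp only [Nat.add_sub_cancel]
  rw [Finset.sum_range_succ]
  have hterm : ∀ k ∈ Finset.range p, (p.choose k : ℂ) * (f (k + 1) * gC f (p - k)) = 0 := by
    intro k hk
    have hkp : k < p := Finset.mem_range.1 hk
    rw [hf0 (k + 1) (by omega) (by omega)]
    ring
  rw [Finset.sum_congr rfl hterm]
  simp [gC_zero]

lemma Af_fin3 (f : ℕ → ℂ) :
    Af f (Finset.univ : Finset (Fin 3)) = 2 * f 1 * f 1 * f 1 - 3 * (f 1 * f 2) + f 3 := by
  rw [Af_eq_sum f (Finset.mem_univ (0 : Fin 3)), Finset.card_univ, Fintype.card_fin]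
  rw [Finset.sum_range_succ, Finset.sum_range_succ, Finset.sum_range_succ,
    Finset.sum_range_zero]
  norm_num [gC_zero, gC_one, gC_two]
  ring

lemma Af_fin4 (f : ℕ → ℂ) :
    Af f (Finset.univ : Finset (Fin 4)) =
      -(6 * (f 1 * f 1 * f 1 * f 1)) + 12 * (f 1 * f 1 * f 2) - 3 * (f 2 * f 2)
        - 4 * (f 1 * f 3) + f 4 := by
  rw [Af_eq_sum f (Finset.mem_univ (0 : Fin 4)), Finset.card_univ, Fintype.card_fin]
  rw [Finset.sum_range_succ, Finset.sum_range_succ, Finset.sum_range_succ,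
    Finset.sum_range_succ, Finset.sum_range_zero]
  norm_num [gC_zero, gC_one, gC_two, gC_three]
  ring

end Stmt15Aux

open Stmt15Aux in
lemma chi_eq_Af {s : ℕ → ℂ} (hs0 : s 0 = 1) (d : ℕ) :
    chi s d = Af s (Finset.univ : Finset (Fin d)) := by
  unfold chi Af
  refine Finset.sum_congr rfl fun P _ => ?_
  congr 1
  refine Finset.prod_congr rfl fun B _ => ?_
  rw [hs0, div_one]
open Classical in
/-- let `S ⊆ ℕ` with `0 ∈ S`, `S ≠ {0}` and `S ≠ ℕ`, and let `s` be the
indicator signature of `S`. Then there is some `d ≥ 3` with `χ(d,s) ≠ 0`, i.e. `{s}` is of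
type `T[∞]`. -/
theorem stmt15 (S : Set ℕ) (h0 : 0 ∈ S) (hne : S ≠ {0}) (hnu : S ≠ Set.univ)
    (s : ℕ → ℂ) (hs : ∀ n, s n = if n ∈ S then 1 else 0) :
    ∃ d : ℕ, 3 ≤ d ∧ chi s d ≠ 0 := by
  classical
  have hs0 : s 0 = 1 := by rw [hs 0, if_pos h0]
  by_cases h1 : 1 ∈ S
  · by_cases h2 : 2 ∈ S
    · have hex : ∃ m, m ∉ S := by
        by_contra h
        push_neg at h
        exact hnu (Set.eq_univ_of_forall h)
      set m := Nat.find hex with hm_def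
      have hm : m ∉ S := Nat.find_spec hex
      have hmin : ∀ j, j < m → j ∈ S := fun j hj => by
        by_contra hjS
        exact (Nat.find_min hex hj) hjS
      have hm3 : 3 ≤ m := by
        have e0 : m ≠ 0 := fun h => hm (by rw [h]; exact h0)
        have e1 : m ≠ 1 := fun h => hm (by rw [h]; exact h1)
        have e2 : m ≠ 2 := fun h => hm (by rw [h]; exact h2)
        omega
      obtain ⟨p, hp⟩ : ∃ p, m = p + 1 := ⟨m - 1, by omega⟩
      refine ⟨m, hm3, ?_⟩
      rw [chi_eq_Af hs0, hp]
      rw [Stmt15Aux.Af_case4 s p (by omega)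
        (fun j hj1 hj2 => by rw [hs j, if_pos (hmin j (by omega))])
        (by rw [hs (p + 1), if_neg (by rw [← hp]; exact hm)])]
      norm_num
    · refine ⟨3, le_refl 3, ?_⟩
      rw [chi_eq_Af hs0, Stmt15Aux.Af_fin3]
      rw [hs 1, if_pos h1, hs 2, if_neg h2]
      by_cases h3 : 3 ∈ S
      · rw [hs 3, if_pos h3]; norm_num
      · rw [hs 3, if_neg h3]; norm_num
  · by_cases h2 : 2 ∈ S
    · refine ⟨4, by norm_num, ?_⟩
      rw [chi_eq_Af hs0, Stmt15Aux.Af_fin4]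
      rw [hs 1, if_neg h1, hs 2, if_pos h2]
      by_cases h4 : 4 ∈ S
      · rw [hs 4, if_pos h4]; norm_num
      · rw [hs 4, if_neg h4]; norm_num
    · have hex : ∃ m, m ∈ S ∧ m ≠ 0 := by
        by_contra h
        push_neg at h
        apply hne
        ext n
        simp only [Set.mem_singleton_iff]
        exact ⟨fun hn => h n hn, fun hn => hn ▸ h0⟩
      set m := Nat.find hex with hm_def
      obtain ⟨hmS, hm0⟩ : m ∈ S ∧ m ≠ 0 := Nat.find_spec hex
      have hmin : ∀ j, j < m → j ≠ 0 → j ∉ S := fun j hj hj0 hjS =>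
        Nat.find_min hex hj ⟨hjS, hj0⟩
      have hm3 : 3 ≤ m := by
        have e1 : m ≠ 1 := fun h => h1 (by rw [← h]; exact hmS)
        have e2 : m ≠ 2 := fun h => h2 (by rw [← h]; exact hmS)
        omega
      obtain ⟨p, hp⟩ : ∃ p, m = p + 1 := ⟨m - 1, by omega⟩
      refine ⟨m, hm3, ?_⟩
      rw [chi_eq_Af hs0, hp]
      rw [Stmt15Aux.Af_case1 s p
        (fun j hj1 hj2 => by rw [hs j, if_neg (hmin j (by omega) (by omega))])]
      rw [hs (p + 1), if_pos (by rw [← hp]; exact hmS)]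
      norm_num
end
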